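/- arXiv:1302.4139 — 3 statements merged into one kernel-verified Lean document; each statement's English description precedes it below -/
import Mathlib

section
/- Fix 0 < α < 1 and N ≥ 1, and let q⁻ := p − sqrt(−2·ln(α)·p(1−p)/N). If 0 < q⁻ and p ≤ 1/2, then for X ~ Bin(N,p) we have P(X ≤ N·q⁻) ≤ α. -/
/-!
Chernoff's method with the tilt `t = s / (p (1 - p))`. For `p ≤ 1/2` the Bernoulli cumulant
generating function satisfies `log (1 - p + p e^{-t}) ≤ -p t + p (1 - p) t² / 2`, a one-sided
sub-Gaussian bound with the true variance `p (1 - p)`; after differentiating in `t` it reduces to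
`tanh x ≤ x`. Hence `P(X ≤ N (p - s)) ≤ exp (-N s² / (2 p (1 - p)))`, which equals `α` for the
given `s`.
-/

open Real Set

lemma Real.sinh_le_mul_cosh {x : ℝ} (hx : 0 ≤ x) : sinh x ≤ x * cosh x := by
  have hderiv (y : ℝ) : HasDerivAt (fun y => y * cosh y - sinh y) (y * sinh y) y :=
    (((hasDerivAt_id' y).mul (hasDerivAt_cosh y)).sub (hasDerivAt_sinh y)).congr_deriv
      (by ring)
  have hmono : MonotoneOn (fun y => y * cosh y - sinh y) (Ici 0) :=
    monotoneOn_of_hasDerivWithinAt_nonneg (convex_Ici 0)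
      (fun y _ => (hderiv y).continuousAt.continuousWithinAt)
      (fun y _ => (hderiv y).hasDerivWithinAt)
      (fun y hy => by
        rw [interior_Ici] at hy
        exact mul_nonneg hy.out.le (sinh_nonneg_iff.mpr hy.out.le))
  simpa using hmono self_mem_Ici hx hx

lemma one_sub_exp_neg_le_mul {p t : ℝ} (hp : p ≤ 1 / 2) (ht : 0 ≤ t) :
    1 - exp (-t) ≤ t * (1 - p + p * exp (-t)) := by
  have hsq : exp (-t) = exp (-(t / 2)) * exp (-(t / 2)) := by rw [← exp_add]; ring_nf
  have hinv : exp (-(t / 2)) * exp (t / 2) = 1 := by rw [← exp_add]; simp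
  have htanh : 1 - exp (-t) ≤ t / 2 * (1 + exp (-t)) := calc
    1 - exp (-t) = 2 * exp (-(t / 2)) * sinh (t / 2) := by
      rw [sinh_eq]; linear_combination -hinv - hsq
    _ ≤ 2 * exp (-(t / 2)) * (t / 2 * cosh (t / 2)) := by
      gcongr; exact sinh_le_mul_cosh (by positivity)
    _ = t / 2 * (1 + exp (-t)) := by
      rw [cosh_eq]; linear_combination (t / 2) * hinv - (t / 2) * hsq
  nlinarith [mul_nonneg ht (sub_nonneg.mpr (exp_le_one_iff.mpr (neg_nonpos.mpr ht)))]

lemma log_one_sub_add_mul_exp_neg_le {p t : ℝ} (hp0 : 0 ≤ p) (hp : p ≤ 1 / 2) (ht : 0 ≤ t) :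
    log (1 - p + p * exp (-t)) ≤ -p * t + p * (1 - p) * t ^ 2 / 2 := by
  set D : ℝ → ℝ := fun s => 1 - p + p * exp (-s)
  have hD (s : ℝ) : 0 < D s := by have := exp_pos (-s); simp only [D]; nlinarith
  set g : ℝ → ℝ := fun s => -p * s + p * (1 - p) * s ^ 2 / 2 - log (D s)
  have hderiv (s : ℝ) :
      HasDerivAt g (p * (1 - p) * (s - (1 - exp (-s)) / D s)) s := by
    have hDs : HasDerivAt D (p * -exp (-s)) s :=
      (((hasDerivAt_neg' s).exp).const_mul p).const_add (1 - p) |>.congr_deriv (by ring)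
    have := ((((hasDerivAt_id' s).const_mul (-p)).add
      (((hasDerivAt_pow 2 s).const_mul (p * (1 - p))).div_const 2)).sub (hDs.log (hD s).ne'))
    refine this.congr_deriv ?_
    field_simp [(hD s).ne']
    simp only [D]
    ring
  have hmono : MonotoneOn g (Ici 0) :=
    monotoneOn_of_hasDerivWithinAt_nonneg (convex_Ici 0)
      (fun s _ => (hderiv s).continuousAt.continuousWithinAt)
      (fun s _ => (hderiv s).hasDerivWithinAt)
      (fun s hs => by
        rw [interior_Ici] at hs
        have hvar : 0 ≤ p * (1 - p) := mul_nonneg hp0 (by linarith)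
        exact mul_nonneg hvar (sub_nonneg.mpr
          ((div_le_iff₀ (hD s)).mpr (one_sub_exp_neg_le_mul hp hs.out.le))))
  have := hmono self_mem_Ici ht ht
  simp only [g, D] at this
  norm_num at this
  linarith

noncomputable def binomialLowerTail (N : ℕ) (p a : ℝ) : ℝ :=
  ∑ k ∈ Finset.range (N + 1),
    if (k : ℝ) ≤ a then (N.choose k : ℝ) * p ^ k * (1 - p) ^ (N - k) else 0

lemma binomialLowerTail_le_exp_mul_pow (N : ℕ) {p t : ℝ} (a : ℝ) (hp0 : 0 ≤ p) (hp1 : p ≤ 1)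
    (ht : 0 ≤ t) : binomialLowerTail N p a ≤ exp (t * a) * (1 - p + p * exp (-t)) ^ N := calc
  binomialLowerTail N p a
      ≤ ∑ k ∈ Finset.range (N + 1),
          (N.choose k : ℝ) * p ^ k * (1 - p) ^ (N - k) * exp (t * (a - k)) := by
    refine Finset.sum_le_sum fun k _ => ?_
    have hterm : 0 ≤ (N.choose k : ℝ) * p ^ k * (1 - p) ^ (N - k) := by
      have : 0 ≤ 1 - p := by linarith
      positivity
    split_ifs with hk
    · exact le_mul_of_one_le_right hterm (one_le_exp (mul_nonneg ht (by linarith)))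
    · positivity
  _ = exp (t * a) * (p * exp (-t) + (1 - p)) ^ N := by
    rw [add_pow, Finset.mul_sum]
    refine Finset.sum_congr rfl fun k _ => ?_
    have hexp : exp (t * (a - k)) = exp (t * a) * exp (-t) ^ k := by
      rw [← exp_nat_mul, ← exp_add]; ring_nf
    rw [hexp, mul_pow]
    ring
  _ = exp (t * a) * (1 - p + p * exp (-t)) ^ N := by rw [add_comm (p * _)]

lemma binomialLowerTail_le_exp_neg_sq (N : ℕ) {p s : ℝ} (hp0 : 0 < p) (hp : p ≤ 1 / 2)
    (hs : 0 ≤ s) :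
    binomialLowerTail N p (N * (p - s)) ≤ exp (-(N * s ^ 2) / (2 * p * (1 - p))) := by
  have hpq : 0 < p * (1 - p) := mul_pos hp0 (by linarith)
  set t := s / (p * (1 - p))
  have ht : 0 ≤ t := div_nonneg hs hpq.le
  have hmgf : (1 - p + p * exp (-t)) ^ N ≤ exp (N * (-p * t + p * (1 - p) * t ^ 2 / 2)) := by
    have hD : 0 < 1 - p + p * exp (-t) := by have := exp_pos (-t); nlinarith
    rw [← exp_log hD, ← exp_nat_mul]
    exact exp_le_exp.mpr (mul_le_mul_of_nonneg_left
      (log_one_sub_add_mul_exp_neg_le hp0.le hp ht) (Nat.cast_nonneg N))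
  calc binomialLowerTail N p (N * (p - s))
      ≤ exp (t * (N * (p - s))) * (1 - p + p * exp (-t)) ^ N :=
        binomialLowerTail_le_exp_mul_pow N _ hp0.le (by linarith) ht
    _ ≤ exp (t * (N * (p - s))) * exp (N * (-p * t + p * (1 - p) * t ^ 2 / 2)) := by gcongr
    _ = exp (-(N * s ^ 2) / (2 * p * (1 - p))) := by
      rw [← exp_add]
      congr 1
      simp only [t]
      field_simp
      ring

/-- Lower percent-point bound via Chernoff: with `q⁻ := p − sqrt(−2·ln(α)·p(1−p)/N)`,
if `0 < q⁻` and `p ≤ 1/2`, then for `X ~ Bin(N,p)` we have `P(X ≤ N·q⁻) ≤ α`. -/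
theorem binomial_lower_percent_point (N : ℕ) (hN : 1 ≤ N) (p α : ℝ)
    (hα0 : 0 < α) (hα1 : α < 1)
    (hq : 0 < p - Real.sqrt (-2 * Real.log α * p * (1 - p) / N))
    (hp : p ≤ 1 / 2) :
    ∑ k ∈ Finset.range (N + 1),
        (if (k : ℝ) ≤ (N : ℝ) * (p - Real.sqrt (-2 * Real.log α * p * (1 - p) / N))
          then (N.choose k : ℝ) * p ^ k * (1 - p) ^ (N - k) else 0)
      ≤ α := by
  set s := Real.sqrt (-2 * Real.log α * p * (1 - p) / N)
  have hp0 : 0 < p := (sqrt_nonneg _).trans_lt (sub_pos.mp hq)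
  have h1p : 0 < 1 - p := by linarith
  have hN0 : (0 : ℝ) < N := by exact_mod_cast hN
  have hs2 : s ^ 2 = -2 * log α * p * (1 - p) / N := by
    refine sq_sqrt (div_nonneg ?_ hN0.le)
    have := log_neg hα0 hα1
    have := mul_pos hp0 h1p
    nlinarith
  calc _ = binomialLowerTail N p (N * (p - s)) := rfl
    _ ≤ exp (-(N * s ^ 2) / (2 * p * (1 - p))) :=
        binomialLowerTail_le_exp_neg_sq N hp0 hp (sqrt_nonneg _)
    _ = exp (log α) := by
      rw [hs2]
      congr 1
      field_simp [h1p.ne']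
    _ = α := exp_log hα0
end

section
/- Let q̄⁺ := (p − ln α/N + sqrt((−p² + p − ln α/(2N))·(−2 ln α)/N)) / (1 − 2 ln α/N) for 0 < α < 1, N ≥ 1, p ∈ (0,1/2). If q̄⁺ ≤ 1/2 then for X ~ Bin(N,p), P(X ≥ N·q̄⁺) ≤ α. -/
/-!
By Chernoff's bound, `P(X ≥ N q) ≤ exp (-N D(q ‖ p))` for `p ≤ q`, and for `p ≤ q ≤ 1/2` the
divergence satisfies `D(q ‖ p) ≥ (q - p)² / (2 q (1 - q))`: the difference
`D(q ‖ x) - (q - x)² / (2 q (1 - q))` vanishes at `x = q` and is antitone in `x` on `[p, q]`.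
The point `q̄⁺` is the root `q > p` of `(q - p)² / (2 q (1 - q)) = -ln α / N`, so the tail is at
most `exp (ln α) = α`.
-/

open Real Finset

/-- `D(q ‖ p)`, the Kullback–Leibler divergence of `Bernoulli q` from `Bernoulli p`. -/
noncomputable def bernoulliKL (q p : ℝ) : ℝ :=
  q * (log q - log p) + (1 - q) * (log (1 - q) - log (1 - p))

theorem hasDerivAt_bernoulliKL (q : ℝ) {x : ℝ} (hx0 : 0 < x) (hx1 : x < 1) :
    HasDerivAt (bernoulliKL q) ((x - q) / (x * (1 - x))) x := by
  have hlog : HasDerivAt log x⁻¹ x := hasDerivAt_log hx0.ne'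
  have hlog1 : HasDerivAt (fun y ↦ log (1 - y)) (-1 / (1 - x)) x := by
    simpa using ((hasDerivAt_id x).const_sub 1).log (by simp; linarith)
  refine (((hlog.const_sub (log q)).const_mul q).add
    ((hlog1.const_sub (log (1 - q))).const_mul (1 - q))).congr_deriv ?_
  have : 1 - x ≠ 0 := by linarith
  field_simp
  ring

theorem sq_div_le_bernoulliKL {p q : ℝ} (hp : 0 < p) (hpq : p ≤ q) (hq : q ≤ 1 / 2) :
    (q - p) ^ 2 / (2 * q * (1 - q)) ≤ bernoulliKL q p := by
  set C := 2 * q * (1 - q)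
  have hC : 0 < C := by
    have : 0 < q := hp.trans_le hpq
    have : 0 < 1 - q := by linarith
    positivity
  let g x := bernoulliKL q x - (q - x) ^ 2 / C
  have hg : ∀ x ∈ Set.Icc p q,
      HasDerivAt g ((x - q) / (x * (1 - x)) + 2 * (q - x) / C) x := fun x hx ↦
    ((hasDerivAt_bernoulliKL q (hp.trans_le hx.1) (by linarith [hx.2])).sub
      ((((hasDerivAt_id x).const_sub q).pow 2).div_const C)).congr_deriv (by simp; ring)
  have hanti : AntitoneOn g (Set.Icc p q) := by
    refine antitoneOn_of_hasDerivWithinAt_nonpos (convex_Icc p q)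
      (fun x hx ↦ (hg x hx).continuousAt.continuousWithinAt)
      (fun x hx ↦ (hg x (interior_subset hx)).hasDerivWithinAt) fun x hx ↦ ?_
    rw [interior_Icc] at hx
    have hx0 : 0 < x := hp.trans hx.1
    have hx1 : 0 < 1 - x := by linarith [hx.2]
    have hfactor : (x - q) / (x * (1 - x)) + 2 * (q - x) / C
        = -(2 * (q - x) ^ 2 * (1 - q - x)) / (x * (1 - x) * C) := by
      field_simp; ring
    rw [hfactor]
    apply div_nonpos_of_nonpos_of_nonneg _ (by positivity)
    have : 0 ≤ (q - x) ^ 2 * (1 - q - x) := mul_nonneg (sq_nonneg _) (by linarith [hx.2])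
    linarith
  have := hanti (Set.left_mem_Icc.2 hpq) (Set.right_mem_Icc.2 hpq) hpq
  simpa [g, bernoulliKL] using this

theorem binomial_tail_le_exp_mul_pow {p : ℝ} (hp0 : 0 ≤ p) (hp1 : p ≤ 1) (N : ℕ) (a : ℝ)
    {t : ℝ} (ht : 0 ≤ t) :
    ∑ k ∈ range (N + 1),
        (if a ≤ (k : ℝ) then (N.choose k : ℝ) * p ^ k * (1 - p) ^ (N - k) else 0)
      ≤ exp (-t * a) * (p * exp t + (1 - p)) ^ N := by
  have h1p : 0 ≤ 1 - p := by linarith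
  calc _ ≤ ∑ k ∈ range (N + 1),
        exp (-t * a) * ((p * exp t) ^ k * (1 - p) ^ (N - k) * N.choose k) := by
        refine sum_le_sum fun k _ ↦ ?_
        have hterm : exp (-t * a) * ((p * exp t) ^ k * (1 - p) ^ (N - k) * N.choose k)
            = (N.choose k : ℝ) * p ^ k * (1 - p) ^ (N - k) * exp (t * (k - a)) := by
          rw [mul_pow, ← exp_nat_mul, show t * (k - a) = k * t + -t * a by ring, exp_add]
          ring
        split_ifs with h
        · rw [hterm]
          exact le_mul_of_one_le_right (by positivity) (one_le_exp (mul_nonneg ht (by linarith)))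
        · positivity
    _ = _ := by rw [← mul_sum, add_pow]

theorem binomial_tail_le_exp_neg_mul_bernoulliKL {p q : ℝ} (hp : 0 < p) (hpq : p ≤ q)
    (hq : q < 1) (N : ℕ) :
    ∑ k ∈ range (N + 1),
        (if (N : ℝ) * q ≤ k then (N.choose k : ℝ) * p ^ k * (1 - p) ^ (N - k) else 0)
      ≤ exp (-N * bernoulliKL q p) := by
  have hq0 : 0 < q := hp.trans_le hpq
  have h1p : 0 < 1 - p := by linarith
  have h1q : 0 < 1 - q := by linarith
  -- the optimal tilt: `exp t = q (1 - p) / (p (1 - q))`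
  set r := q * (1 - p) / (p * (1 - q)) with hr
  have hr0 : 0 < r := by positivity
  have hr1 : 1 ≤ r := by rw [hr, one_le_div (by positivity)]; nlinarith
  have hmgf : p * exp (log r) + (1 - p) = (1 - p) / (1 - q) := by
    rw [exp_log hr0, hr]; field_simp; ring
  refine (binomial_tail_le_exp_mul_pow hp.le (by linarith) N _ (log_nonneg hr1)).trans_eq ?_
  rw [hmgf, ← exp_log (div_pos h1p h1q), ← exp_nat_mul, ← exp_add, hr,
    log_div (by positivity) (by positivity), log_mul hq0.ne' h1p.ne', log_mul hp.ne' h1q.ne',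
    log_div h1p.ne' h1q.ne', bernoulliKL]
  ring_nf

/-- The larger root `q` of `(q - p)² = 2 c q (1 - q)`; for `c = -ln α / N` this is `q̄⁺`. -/
noncomputable def upperPercentPoint (p c : ℝ) : ℝ :=
  (p + c + √((p - p ^ 2 + c / 2) * (2 * c))) / (1 + 2 * c)

theorem upperPercentPoint_sub_sq {p c : ℝ} (hp0 : 0 ≤ p) (hp1 : p ≤ 1) (hc : 0 ≤ c) :
    (upperPercentPoint p c - p) ^ 2
      = 2 * c * upperPercentPoint p c * (1 - upperPercentPoint p c) := by
  have hD : 0 ≤ (p - p ^ 2 + c / 2) * (2 * c) := mul_nonneg (by nlinarith) (by linarith)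
  have hs := sq_sqrt hD
  have : (1 + 2 * c) ≠ 0 := by positivity
  rw [upperPercentPoint]
  generalize √((p - p ^ 2 + c / 2) * (2 * c)) = s at hs ⊢
  field_simp
  linear_combination (1 + 2 * c) * hs

theorem lt_upperPercentPoint {p c : ℝ} (hp0 : 0 < p) (hp1 : p < 1) (hc : 0 < c) :
    p < upperPercentPoint p c := by
  rw [upperPercentPoint, lt_div_iff₀ (by positivity)]
  have hpos : 0 < c * p * (1 - p) * (1 + 2 * c) := by
    have : 0 < 1 - p := by linarith
    positivity
  have : c * (2 * p - 1) < √((p - p ^ 2 + c / 2) * (2 * c)) :=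
    lt_sqrt_of_sq_lt (by linear_combination 2 * hpos)
  linarith

/-- Upper percent-point bound via Chernoff: with
`q̄⁺ := (p − ln α/N + sqrt((−p² + p − ln α/(2N))·(−2 ln α)/N)) / (1 − 2 ln α/N)`,
if `q̄⁺ ≤ 1/2` then for `X ~ Bin(N,p)` we have `P(X ≥ N·q̄⁺) ≤ α`. -/
theorem binomial_upper_percent_point (N : ℕ) (hN : 1 ≤ N) (p α : ℝ)
    (hα0 : 0 < α) (hα1 : α < 1) (hp0 : 0 < p) (hp2 : p < 1 / 2)
    (hq : (p - Real.log α / N +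
        Real.sqrt ((-p ^ 2 + p - Real.log α / (2 * N)) * (-2 * Real.log α) / N)) /
        (1 - 2 * Real.log α / N) ≤ 1 / 2) :
    ∑ k ∈ Finset.range (N + 1),
        (if (N : ℝ) * ((p - Real.log α / N +
              Real.sqrt ((-p ^ 2 + p - Real.log α / (2 * N)) * (-2 * Real.log α) / N)) /
              (1 - 2 * Real.log α / N)) ≤ (k : ℝ)
          then (N.choose k : ℝ) * p ^ k * (1 - p) ^ (N - k) else 0)
      ≤ α := by
  have hNpos : (0 : ℝ) < N := by exact_mod_cast hN
  set c := -log α / N with hc_def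
  have hc : 0 < c := div_pos (neg_pos.2 (log_neg hα0 hα1)) hNpos
  have hroot : (p - log α / N + √((-p ^ 2 + p - log α / (2 * N)) * (-2 * log α) / N)) /
      (1 - 2 * log α / N) = upperPercentPoint p c := by
    rw [upperPercentPoint, hc_def]; ring_nf
  rw [hroot] at hq ⊢
  set q := upperPercentPoint p c
  have hpq : p < q := lt_upperPercentPoint hp0 (by linarith) hc
  have hKL : c ≤ bernoulliKL q p := by
    have hpos : 0 < 2 * q * (1 - q) := mul_pos (mul_pos two_pos (hp0.trans hpq)) (by linarith)
    have hsq : (q - p) ^ 2 = 2 * c * q * (1 - q) :=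
      upperPercentPoint_sub_sq hp0.le (by linarith) hc.le
    calc c = (q - p) ^ 2 / (2 * q * (1 - q)) := by rw [hsq, eq_div_iff hpos.ne']; ring
      _ ≤ bernoulliKL q p := sq_div_le_bernoulliKL hp0 hpq.le hq
  calc _ ≤ exp (-N * bernoulliKL q p) :=
        binomial_tail_le_exp_neg_mul_bernoulliKL hp0 hpq.le (by linarith) N
    _ ≤ exp (-N * c) := exp_le_exp.2 (mul_le_mul_of_nonpos_left hKL (by linarith))
    _ = α := by rw [show -N * c = log α by rw [hc_def]; field_simp, exp_log hα0]
end

section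
/- Let ρ_{f(A),E} = p₀|0⟩⟨0|⊗ρ₀ + p₁|1⟩⟨1|⊗ρ₁ with p₀+p₁=1, p₀,p₁>0, and let ρ_E = p₀ρ₀ + p₁ρ₁. Then for any operator T with 0 ≤ T ≤ I on the E system, ‖ρ_{f(A),E} − ρ_{f(A)}⊗ρ_E‖₁ ≥ 4p₀p₁·|Tr ρ₀T − Tr ρ₁T|. -/
/-!
Since `p₁ = 1 - p₀`, the difference of the two states is `p₀ p₁ Z ⊗ (ρ₀ - ρ₁)` with
`Z = |0⟩⟨0| - |1⟩⟨1|`. Test it against `M = Z ⊗ (2T - 1)`: from `0 ≤ T ≤ 1` we get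
`-1 ≤ M ≤ 1`, and `Tr (Z ⊗ (ρ₀ - ρ₁)) M = Tr Z² · Tr (ρ₀ - ρ₁)(2T - 1) = 4 (Tr ρ₀T - Tr ρ₁T)`
because `Tr ρ₀ = Tr ρ₁`. Finally `|Re Tr A M| ≤ ‖A‖₁` for Hermitian `A` and `-1 ≤ M ≤ 1`: in an
eigenbasis of `A` the trace is `∑ λᵢ Mᵢᵢ`, and the diagonal entries of `M` there have real part
in `[-1, 1]`.
-/

open Matrix Kronecker ComplexOrder

/-- Trace norm of a Hermitian matrix: the sum of absolute values of its eigenvalues. -/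
noncomputable def traceNorm {n : Type*} [Fintype n] [DecidableEq n]
    (A : Matrix n n ℂ) (hA : A.IsHermitian) : ℝ :=
  ∑ i, |hA.eigenvalues i|

/-- The cq-state `ρ_{f(A),E} = p₀|0⟩⟨0|⊗ρ₀ + p₁|1⟩⟨1|⊗ρ₁`. -/
noncomputable def rhoFAE {d : ℕ} (p₀ p₁ : ℝ) (ρ₀ ρ₁ : Matrix (Fin d) (Fin d) ℂ) :
    Matrix (Fin 2 × Fin d) (Fin 2 × Fin d) ℂ :=
  (p₀ : ℂ) • (Matrix.single (0 : Fin 2) (0 : Fin 2) (1 : ℂ) ⊗ₖ ρ₀)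
    + (p₁ : ℂ) • (Matrix.single (1 : Fin 2) (1 : Fin 2) (1 : ℂ) ⊗ₖ ρ₁)

/-- The product state `ρ_{f(A)} ⊗ ρ_E` where `ρ_{f(A)} = p₀|0⟩⟨0| + p₁|1⟩⟨1|` and
`ρ_E = p₀ρ₀ + p₁ρ₁`. -/
noncomputable def rhoFAtimesE {d : ℕ} (p₀ p₁ : ℝ) (ρ₀ ρ₁ : Matrix (Fin d) (Fin d) ℂ) :
    Matrix (Fin 2 × Fin d) (Fin 2 × Fin d) ℂ :=
  (Matrix.single (0 : Fin 2) (0 : Fin 2) (p₀ : ℂ)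
      + Matrix.single (1 : Fin 2) (1 : Fin 2) (p₁ : ℂ))
    ⊗ₖ ((p₀ : ℂ) • ρ₀ + (p₁ : ℂ) • ρ₁)

namespace Matrix

section Kronecker

variable {α l m n p : Type*}

theorem sub_kronecker [NonUnitalNonAssocRing α] (A₁ A₂ : Matrix l m α) (B : Matrix n p α) :
    (A₁ - A₂) ⊗ₖ B = A₁ ⊗ₖ B - A₂ ⊗ₖ B := by
  ext; simp [sub_mul]

theorem kronecker_sub [NonUnitalNonAssocRing α] (A : Matrix l m α) (B₁ B₂ : Matrix n p α) :
    A ⊗ₖ (B₁ - B₂) = A ⊗ₖ B₁ - A ⊗ₖ B₂ := by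
  ext; simp [mul_sub]

end Kronecker

lemma posSemidef_single_one {ι : Type*} [Fintype ι] [DecidableEq ι] (i : ι) :
    (single i i (1 : ℂ)).PosSemidef := by
  rw [← diagonal_single, posSemidef_diagonal_iff]
  intro j
  rcases eq_or_ne j i with rfl | h
  · simp
  · simp [h]

section Contraction

variable {n : Type*} [DecidableEq n]

lemma abs_re_diag_le_one {M : Matrix n n ℂ} (h₁ : (1 - M).PosSemidef) (h₂ : (1 + M).PosSemidef)
    (i : n) : |(M i i).re| ≤ 1 := by
  have hsub := Complex.le_def.mp (h₁.diag_nonneg (i := i))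
  have hadd := Complex.le_def.mp (h₂.diag_nonneg (i := i))
  simp only [sub_apply, add_apply, one_apply_eq, Complex.sub_re, Complex.add_re,
    Complex.one_re, Complex.zero_re] at hsub hadd
  rw [abs_le]
  constructor <;> linarith

lemma posSemidef_one_sub_two_smul_sub_one {T : Matrix n n ℂ} (hT1 : (1 - T).PosSemidef) :
    (1 - ((2 : ℂ) • T - 1)).PosSemidef := by
  have h : 1 - ((2 : ℂ) • T - 1) = (2 : ℂ) • (1 - T) := by module
  exact h ▸ hT1.smul (by norm_num)

lemma posSemidef_one_add_two_smul_sub_one {T : Matrix n n ℂ} (hT : T.PosSemidef) :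
    (1 + ((2 : ℂ) • T - 1)).PosSemidef := by
  rw [add_sub_cancel]
  exact hT.smul (by norm_num)

variable [Fintype n]

lemma IsHermitian.trace_mul_eq_sum_eigenvalues_mul_diag {A : Matrix n n ℂ} (hA : A.IsHermitian)
    (M : Matrix n n ℂ) :
    (A * M).trace = ∑ i, (hA.eigenvalues i : ℂ) *
      ((hA.eigenvectorUnitary : Matrix n n ℂ)ᴴ * M * hA.eigenvectorUnitary) i i := by
  conv_lhs => rw [hA.spectral_theorem, Unitary.conjStarAlgAut_apply]
  rw [Matrix.mul_assoc, trace_mul_comm, ← Matrix.mul_assoc, trace_mul_comm]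
  simp [trace, diagonal_mul, star_eq_conjTranspose]

lemma IsHermitian.abs_re_trace_mul_le_traceNorm {A M : Matrix n n ℂ} (hA : A.IsHermitian)
    (h₁ : (1 - M).PosSemidef) (h₂ : (1 + M).PosSemidef) :
    |((A * M).trace).re| ≤ traceNorm A hA := by
  set U : Matrix n n ℂ := (hA.eigenvectorUnitary : Matrix n n ℂ)
  have hU : Uᴴ * U = 1 := mem_unitaryGroup_iff'.mp hA.eigenvectorUnitary.2
  have hconj₁ : (1 - Uᴴ * M * U).PosSemidef := by
    simpa [Matrix.mul_sub, Matrix.sub_mul, hU] using h₁.conjTranspose_mul_mul_same U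
  have hconj₂ : (1 + Uᴴ * M * U).PosSemidef := by
    simpa [Matrix.mul_add, Matrix.add_mul, hU] using h₂.conjTranspose_mul_mul_same U
  rw [hA.trace_mul_eq_sum_eigenvalues_mul_diag, Complex.re_sum, traceNorm]
  refine (Finset.abs_sum_le_sum_abs _ _).trans (Finset.sum_le_sum fun i _ => ?_)
  rw [Complex.re_ofReal_mul, abs_mul]
  exact mul_le_of_le_one_right (abs_nonneg _) (abs_re_diag_le_one hconj₁ hconj₂ i)

lemma trace_sub_mul_two_smul_sub_one {ρ₀ ρ₁ : Matrix n n ℂ} (htr : ρ₀.trace = ρ₁.trace)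
    (T : Matrix n n ℂ) :
    ((ρ₀ - ρ₁) * ((2 : ℂ) • T - 1)).trace = 2 * ((ρ₀ * T).trace - (ρ₁ * T).trace) := by
  simp only [Matrix.sub_mul, Matrix.mul_sub, Matrix.mul_smul, Matrix.mul_one, trace_sub,
    trace_smul, htr, smul_eq_mul]
  ring

end Contraction

end Matrix

def pauliZ : Matrix (Fin 2) (Fin 2) ℂ := single 0 0 1 - single 1 1 1

lemma pauliZ_mul_self : pauliZ * pauliZ = 1 := by
  ext i j
  fin_cases i <;> fin_cases j <;> simp [pauliZ, mul_apply, single]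

lemma trace_pauliZ_kronecker_mul_pauliZ_kronecker {m : Type*} [Fintype m] (σ τ : Matrix m m ℂ) :
    ((pauliZ ⊗ₖ σ) * (pauliZ ⊗ₖ τ)).trace = 2 * (σ * τ).trace := by
  rw [← mul_kronecker_mul, pauliZ_mul_self, trace_kronecker, trace_one]
  simp

lemma posSemidef_one_sub_pauliZ_kronecker {m : Type*} [Fintype m] [DecidableEq m]
    {τ : Matrix m m ℂ} (h₁ : (1 - τ).PosSemidef) (h₂ : (1 + τ).PosSemidef) :
    (1 - pauliZ ⊗ₖ τ).PosSemidef := by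
  have hone : (1 : Matrix (Fin 2) (Fin 2) ℂ) = single 0 0 1 + single 1 1 1 := by
    ext i j
    fin_cases i <;> fin_cases j <;> simp [single]
  have hsplit : 1 - pauliZ ⊗ₖ τ = single 0 0 1 ⊗ₖ (1 - τ) + single 1 1 1 ⊗ₖ (1 + τ) := by
    rw [← one_kronecker_one, hone, pauliZ]
    simp only [add_kronecker, sub_kronecker, kronecker_add, kronecker_sub]
    abel
  rw [hsplit]
  exact ((posSemidef_single_one 0).kronecker h₁).add ((posSemidef_single_one 1).kronecker h₂)

lemma posSemidef_one_add_pauliZ_kronecker {m : Type*} [Fintype m] [DecidableEq m]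
    {τ : Matrix m m ℂ} (h₁ : (1 - τ).PosSemidef) (h₂ : (1 + τ).PosSemidef) :
    (1 + pauliZ ⊗ₖ τ).PosSemidef := by
  have := posSemidef_one_sub_pauliZ_kronecker (τ := -τ) (by rwa [sub_neg_eq_add])
    (by rwa [← sub_eq_add_neg])
  have hneg : pauliZ ⊗ₖ (-τ) = -(pauliZ ⊗ₖ τ) := by ext; simp
  rwa [hneg, sub_neg_eq_add] at this

lemma rhoFAE_sub_rhoFAtimesE {d : ℕ} {p₀ p₁ : ℝ} (hsum : p₀ + p₁ = 1)
    (ρ₀ ρ₁ : Matrix (Fin d) (Fin d) ℂ) :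
    rhoFAE p₀ p₁ ρ₀ ρ₁ - rhoFAtimesE p₀ p₁ ρ₀ ρ₁
      = ((p₀ * p₁ : ℝ) : ℂ) • (pauliZ ⊗ₖ (ρ₀ - ρ₁)) := by
  obtain rfl : p₁ = 1 - p₀ := by linarith
  ext ⟨a, i⟩ ⟨b, j⟩
  fin_cases a <;> fin_cases b <;> simp [rhoFAE, rhoFAtimesE, pauliZ, single] <;> ring

theorem traceNorm_ge_four_p0_p1_general {d : ℕ}
    (ρ₀ ρ₁ : Matrix (Fin d) (Fin d) ℂ)
    (htr₀ : ρ₀.trace = 1) (htr₁ : ρ₁.trace = 1)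
    (p₀ p₁ : ℝ) (hsum : p₀ + p₁ = 1)
    (T : Matrix (Fin d) (Fin d) ℂ) (hT : T.PosSemidef)
    (hT1 : ((1 : Matrix (Fin d) (Fin d) ℂ) - T).PosSemidef)
    (hHerm : (rhoFAE p₀ p₁ ρ₀ ρ₁ - rhoFAtimesE p₀ p₁ ρ₀ ρ₁).IsHermitian) :
    4 * p₀ * p₁ * |((ρ₀ * T).trace).re - ((ρ₁ * T).trace).re|
      ≤ traceNorm (rhoFAE p₀ p₁ ρ₀ ρ₁ - rhoFAtimesE p₀ p₁ ρ₀ ρ₁) hHerm := by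
  set τ : Matrix (Fin d) (Fin d) ℂ := (2 : ℂ) • T - 1
  have hτ₁ : (1 - τ).PosSemidef := posSemidef_one_sub_two_smul_sub_one hT1
  have hτ₂ : (1 + τ).PosSemidef := posSemidef_one_add_two_smul_sub_one hT
  have htrace : ((rhoFAE p₀ p₁ ρ₀ ρ₁ - rhoFAtimesE p₀ p₁ ρ₀ ρ₁) * (pauliZ ⊗ₖ τ)).trace
      = ((4 * p₀ * p₁ : ℝ) : ℂ) * ((ρ₀ * T).trace - (ρ₁ * T).trace) := by
    rw [rhoFAE_sub_rhoFAtimesE hsum, smul_mul, trace_smul,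
      trace_pauliZ_kronecker_mul_pauliZ_kronecker,
      trace_sub_mul_two_smul_sub_one (htr₀.trans htr₁.symm), smul_eq_mul]
    push_cast
    ring
  calc 4 * p₀ * p₁ * |((ρ₀ * T).trace).re - ((ρ₁ * T).trace).re|
      ≤ |4 * p₀ * p₁ * (((ρ₀ * T).trace).re - ((ρ₁ * T).trace).re)| := by
        rw [abs_mul]; gcongr; exact le_abs_self _
    _ = |((rhoFAE p₀ p₁ ρ₀ ρ₁ - rhoFAtimesE p₀ p₁ ρ₀ ρ₁) * (pauliZ ⊗ₖ τ)).trace.re| := by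
        rw [htrace, Complex.re_ofReal_mul, Complex.sub_re]
    _ ≤ _ := hHerm.abs_re_trace_mul_le_traceNorm
        (posSemidef_one_sub_pauliZ_kronecker hτ₁ hτ₂)
        (posSemidef_one_add_pauliZ_kronecker hτ₁ hτ₂)

/-- For density operators `ρ₀, ρ₁` and any POVM element `0 ≤ T ≤ I` on the E system,
`‖ρ_{f(A),E} − ρ_{f(A)}⊗ρ_E‖₁ ≥ 4p₀p₁·|Tr ρ₀T − Tr ρ₁T|`. -/
theorem traceNorm_ge_four_p0_p1 {d : ℕ}
    (ρ₀ ρ₁ : Matrix (Fin d) (Fin d) ℂ)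
    (hρ₀ : ρ₀.PosSemidef) (hρ₁ : ρ₁.PosSemidef)
    (htr₀ : ρ₀.trace = 1) (htr₁ : ρ₁.trace = 1)
    (p₀ p₁ : ℝ) (hp₀ : 0 < p₀) (hp₁ : 0 < p₁) (hsum : p₀ + p₁ = 1)
    (T : Matrix (Fin d) (Fin d) ℂ) (hT : T.PosSemidef)
    (hT1 : ((1 : Matrix (Fin d) (Fin d) ℂ) - T).PosSemidef)
    (hHerm : (rhoFAE p₀ p₁ ρ₀ ρ₁ - rhoFAtimesE p₀ p₁ ρ₀ ρ₁).IsHermitian) :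
    4 * p₀ * p₁ * |((ρ₀ * T).trace).re - ((ρ₁ * T).trace).re|
      ≤ traceNorm (rhoFAE p₀ p₁ ρ₀ ρ₁ - rhoFAtimesE p₀ p₁ ρ₀ ρ₁) hHerm :=
  traceNorm_ge_four_p0_p1_general ρ₀ ρ₁ htr₀ htr₁ p₀ p₁ hsum T hT hT1 hHerm
end
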